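/- Let A be a unital associative k-algebra and t ∈ A ⊗ A an element satisfying a·t = t·a for all a ∈ A. Then the map Δ : A → A ⊗ A, Δ(a) = a·t, is coassociative: (Δ ⊗ id) ∘ Δ = (id ⊗ Δ) ∘ Δ. -/

import Mathlib

/-!
Write `x₁₂ y₂₃ := (x ⊗ 1)(1 ⊗ y) ∈ A ⊗ A ⊗ A`; this product is balanced, `(x (1 ⊗ a))₁₂ y₂₃ =
x₁₂ ((a ⊗ 1) y)₂₃`. One checks on pure tensors that `(id ⊗ Δ) x = x₁₂ t₂₃` and, using the
invariance `(a ⊗ 1) t = t (1 ⊗ a)`, that `(Δ ⊗ id) x = t₁₂ x₂₃`. Hence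
`(Δ ⊗ id) (Δ a) = t₁₂ ((a ⊗ 1) t)₂₃ = (t (1 ⊗ a))₁₂ t₂₃ = ((a ⊗ 1) t)₁₂ t₂₃ = (id ⊗ Δ) (Δ a)`.
-/

open scoped TensorProduct

open TensorProduct (assoc map map_tmul assoc_tmul)
open Algebra.TensorProduct (tmul_mul_tmul)

section
variable {k A B C : Type*} [CommSemiring k] [Semiring A] [Semiring B] [Semiring C]
  [Algebra k A] [Algebra k B] [Algebra k C]

theorem TensorProduct.assoc_mul (x y : (A ⊗[k] B) ⊗[k] C) :
    assoc k A B C (x * y) = assoc k A B C x * assoc k A B C y :=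
  map_mul (Algebra.TensorProduct.assoc k k k A B C) x y

/-- The product `x₁₂ y₂₃`; on pure tensors `(s ⊗ r, u ⊗ v) ↦ s ⊗ (r u ⊗ v)`. -/
noncomputable def mulMiddle (x : A ⊗[k] B) (y : B ⊗[k] C) : A ⊗[k] (B ⊗[k] C) :=
  assoc k A B C (x ⊗ₜ 1) * (1 ⊗ₜ y)

theorem mulMiddle_mul_one_tmul (x : A ⊗[k] B) (b : B) (y : B ⊗[k] C) :
    mulMiddle (x * (1 ⊗ₜ b)) y = mulMiddle x ((b ⊗ₜ 1) * y) := by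
  calc mulMiddle (x * (1 ⊗ₜ b)) y
      = assoc k A B C (x ⊗ₜ 1) * (assoc k A B C ((1 ⊗ₜ b) ⊗ₜ 1) * (1 ⊗ₜ y)) := by
        rw [mulMiddle, ← mul_assoc, ← TensorProduct.assoc_mul, tmul_mul_tmul, mul_one]
    _ = mulMiddle x ((b ⊗ₜ 1) * y) := by
        rw [assoc_tmul, tmul_mul_tmul, one_mul, mulMiddle]

theorem map_id_comul_eq_mulMiddle {Δ : B →ₗ[k] B ⊗[k] C} {t : B ⊗[k] C}
    (hΔ : ∀ b, Δ b = (b ⊗ₜ 1) * t) (x : A ⊗[k] B) :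
    map LinearMap.id Δ x = mulMiddle x t := by
  induction x using TensorProduct.induction_on with
  | zero => simp [mulMiddle]
  | tmul a b =>
    rw [map_tmul, hΔ, mulMiddle, assoc_tmul, tmul_mul_tmul, mul_one, LinearMap.id_apply]
  | add x y hx hy =>
    rw [map_add, hx, hy, mulMiddle, mulMiddle, mulMiddle, TensorProduct.add_tmul, map_add,
      add_mul]

theorem assoc_map_comul_id_eq_mulMiddle {Δ : A →ₗ[k] A ⊗[k] A} {t : A ⊗[k] A}
    (ht : ∀ a : A, (a ⊗ₜ[k] (1 : A)) * t = t * ((1 : A) ⊗ₜ[k] a))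
    (hΔ : ∀ a, Δ a = (a ⊗ₜ 1) * t) (x : A ⊗[k] C) :
    assoc k A A C (map Δ LinearMap.id x) = mulMiddle t x := by
  induction x using TensorProduct.induction_on with
  | zero => simp [mulMiddle]
  | tmul a c =>
    have hsplit : (t * (1 ⊗ₜ a)) ⊗ₜ[k] c = (t ⊗ₜ 1) * ((1 ⊗ₜ a) ⊗ₜ c) := by
      rw [tmul_mul_tmul, one_mul]
    rw [map_tmul, hΔ, ht, LinearMap.id_apply, hsplit, TensorProduct.assoc_mul, assoc_tmul,
      mulMiddle]
  | add x y hx hy =>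
    rw [map_add, map_add, hx, hy, mulMiddle, mulMiddle, mulMiddle, TensorProduct.tmul_add,
      mul_add]

end

/-- If `t ∈ A ⊗ A` is invariant then `Δ(a) := a·t` is coassociative:
`(Δ ⊗ id) ∘ Δ = (id ⊗ Δ) ∘ Δ` (up to the associator of tensor products). -/
theorem stmt_3 {k : Type*} [Field k] {A : Type*} [Ring A] [Algebra k A]
    (t : A ⊗[k] A)
    (ht : ∀ a : A, (a ⊗ₜ[k] (1 : A)) * t = t * ((1 : A) ⊗ₜ[k] a))
    (Δ : A →ₗ[k] A ⊗[k] A)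
    (hΔ : ∀ a : A, Δ a = (a ⊗ₜ[k] (1 : A)) * t) :
    (TensorProduct.assoc k A A A).toLinearMap ∘ₗ
        TensorProduct.map Δ LinearMap.id ∘ₗ Δ
      = TensorProduct.map LinearMap.id Δ ∘ₗ Δ := by
  ext a
  calc assoc k A A A (map Δ LinearMap.id (Δ a))
      = mulMiddle t ((a ⊗ₜ 1) * t) := by rw [assoc_map_comul_id_eq_mulMiddle ht hΔ, hΔ]
    _ = mulMiddle ((a ⊗ₜ 1) * t) t := by rw [← mulMiddle_mul_one_tmul, ht]
    _ = map LinearMap.id Δ (Δ a) := by rw [map_id_comul_eq_mulMiddle hΔ, hΔ]
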